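/- Let m ≥ 3, let A be a semi-symmetric strong M-tensor of order m and dimension n, let b ∈ ℝⁿ with b ≥ 0, I₊ = {i : b_i > 0} nonempty, and I₀ = {i : b_i = 0}. Let 0 < ε′ < ε ≤ 1. If x* ∈ ℝⁿ satisfies x* > 0 componentwise and A (x*)^{m−1} = b, then y* := (x*)^{[m−1]} belongs to F̄_{ε,ε′}; that is, (A((y*)^{[1/(m−1)]})^{m−1})_i ≥ ε b_i for all i ∈ I₊, the submatrix f'(y*)_{I₊I₊} is invertible, and (A((y*)^{[1/(m−1)]})^{m−1})_{I₀} ≥ ε′ · f'(y*)_{I₀I₊} f'(y*)_{I₊I₊}^{−1} b_{I₊} componentwise. -/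

import Mathlib

open Finset Matrix Filter Topology

noncomputable section

/-- `(A x^{m-1})_i`: action of an `m`th-order `n`-dimensional tensor, stored with its first
index separated and `q = m-1` trailing indices:
`(A x^{m-1})_i = ∑_{i₂,…,i_m} a_{i i₂…i_m} x_{i₂}⋯x_{i_m}`. -/
def tApp {n q : ℕ} (A : Fin n → (Fin q → Fin n) → ℝ) (x : Fin n → ℝ) (i : Fin n) : ℝ :=
  ∑ g : Fin q → Fin n, A i g * ∏ j, x (g j)

/-- Complex version of `tApp` (for eigenvalues). -/
def tAppC {n q : ℕ} (A : Fin n → (Fin q → Fin n) → ℝ) (x : Fin n → ℂ) (i : Fin n) : ℂ :=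
  ∑ g : Fin q → Fin n, (A i g : ℂ) * ∏ j, x (g j)

/-- The identity tensor: entry `1` when all indices coincide, `0` otherwise. -/
def identT (n q : ℕ) : Fin n → (Fin q → Fin n) → ℝ :=
  fun i g => if ∀ j, g j = i then 1 else 0

/-- `lam ∈ ℂ` is an eigenvalue of the tensor `B`: there is a nonzero `x ∈ ℂⁿ` with
`(B x^{m-1})_i = lam * x_i^{m-1}` for all `i`. -/
def IsTensorEigenvalue {n q : ℕ} (B : Fin n → (Fin q → Fin n) → ℝ) (lam : ℂ) : Prop :=
  ∃ x : Fin n → ℂ, x ≠ 0 ∧ ∀ i, tAppC B x i = lam * x i ^ q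

/-- Semi-symmetry: the entries `a_{i i₂…i_m}` are invariant under permutations of `i₂,…,i_m`. -/
def IsSemiSymmetric {n q : ℕ} (A : Fin n → (Fin q → Fin n) → ℝ) : Prop :=
  ∀ (i : Fin n) (g : Fin q → Fin n) (σ : Equiv.Perm (Fin q)), A i (g ∘ σ) = A i g

/-- Z-tensor: all off-diagonal entries are nonpositive. -/
def IsZTensor {n q : ℕ} (A : Fin n → (Fin q → Fin n) → ℝ) : Prop :=
  ∀ (i : Fin n) (g : Fin q → Fin n), ¬(∀ j, g j = i) → A i g ≤ 0

/-- Strong (nonsingular) M-tensor: `A = s·I − B` with `B ≥ 0` and `s > ρ(B)`,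
i.e. `|λ| < s` for every eigenvalue `λ` of `B`. -/
def IsStrongMTensor {n q : ℕ} (A : Fin n → (Fin q → Fin n) → ℝ) : Prop :=
  ∃ (s : ℝ) (B : Fin n → (Fin q → Fin n) → ℝ),
    (∀ i g, 0 ≤ B i g) ∧ (∀ i g, A i g = s * identT n q i g - B i g) ∧
    ∀ lam : ℂ, IsTensorEigenvalue B lam → ‖lam‖ < s

/-- Componentwise power `y^{[α]}`. -/
def cPow {n : ℕ} (y : Fin n → ℝ) (α : ℝ) : Fin n → ℝ := fun i => y i ^ α

/-- Euclidean norm on `Fin n → ℝ`. -/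
def enorm2 {n : ℕ} (x : Fin n → ℝ) : ℝ := Real.sqrt (∑ i, x i ^ 2)

/-- The Jacobian matrix of a map `f : ℝⁿ → ℝⁿ` at `y`. -/
def jacM {n : ℕ} (f : (Fin n → ℝ) → Fin n → ℝ) (y : Fin n → ℝ) :
    Matrix (Fin n) (Fin n) ℝ :=
  fun i j => fderiv ℝ (fun z => f z i) y (Pi.single j 1)

/-- `f(y) = A (y^{[1/(m-1)]})^{m-1} − b`, with `q = m−1`. -/
def fres {n q : ℕ} (A : Fin n → (Fin q → Fin n) → ℝ) (b : Fin n → ℝ)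
    (y : Fin n → ℝ) : Fin n → ℝ :=
  fun i => tApp A (cPow y (1 / (q : ℝ))) i - b i

/-- Nonsingular M-matrix: nonpositive off-diagonal entries and `M = s·1 − N` with
`N ≥ 0` entrywise and `s` larger than the spectral radius of `N`. -/
def IsNonsingularMMatrix {k : Type} [Fintype k] [DecidableEq k] (M : Matrix k k ℝ) : Prop :=
  (∀ i j, i ≠ j → M i j ≤ 0) ∧
  ∃ (s : ℝ) (N : Matrix k k ℝ), (∀ i j, 0 ≤ N i j) ∧
    M = s • (1 : Matrix k k ℝ) - N ∧
    ∀ μ ∈ spectrum ℂ (N.map (fun t : ℝ => (t : ℂ))), ‖μ‖ < s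

/-- The feasible set `F_ε = {y > 0 : A (y^{[1/(m-1)]})^{m-1} ≥ ε b}`. -/
def FSet {n q : ℕ} (A : Fin n → (Fin q → Fin n) → ℝ) (b : Fin n → ℝ) (ε : ℝ) :
    Set (Fin n → ℝ) :=
  {y | (∀ i, 0 < y i) ∧ ∀ i, ε * b i ≤ tApp A (cPow y (1 / (q : ℝ))) i}

/-- Acceptance of the trial steplength `t` in the line search: feasibility and
`‖f(y + t d)‖² ≤ (1 − 2σt)‖f(y)‖²`. -/
def StepOK {n q : ℕ} (A : Fin n → (Fin q → Fin n) → ℝ) (b : Fin n → ℝ)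
    (Fb : Set (Fin n → ℝ)) (σ : ℝ) (y d : Fin n → ℝ) (t : ℝ) : Prop :=
  y + t • d ∈ Fb ∧
    enorm2 (fres A b (y + t • d)) ^ 2 ≤ (1 - 2 * σ * t) * enorm2 (fres A b y) ^ 2

/-- Newton's method (Algorithm 2.4 resp. 3.4) with feasible set `Fb`, never terminating:
`y₀ ∈ Fb`; for every `k`, `f(y_k) ≠ 0`, `d_k` is the unique solution of
`f'(y_k) d = −f(y_k)`, `α_k = ρ^{i_k}` with `i_k` the least acceptable exponent, and
`y_{k+1} = y_k + α_k d_k`. -/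
def NewtonIter {n q : ℕ} (A : Fin n → (Fin q → Fin n) → ℝ) (b : Fin n → ℝ)
    (Fb : Set (Fin n → ℝ)) (σ ρ : ℝ) (y d : ℕ → Fin n → ℝ) (α : ℕ → ℝ) : Prop :=
  y 0 ∈ Fb ∧ ∀ k : ℕ,
    fres A b (y k) ≠ 0 ∧
    jacM (fres A b) (y k) *ᵥ d k = -fres A b (y k) ∧
    (∀ d', jacM (fres A b) (y k) *ᵥ d' = -fres A b (y k) → d' = d k) ∧
    (∃ ik : ℕ, α k = ρ ^ ik ∧ StepOK A b Fb σ (y k) (d k) (ρ ^ ik) ∧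
      ∀ i < ik, ¬StepOK A b Fb σ (y k) (d k) (ρ ^ i)) ∧
    y (k + 1) = y k + α k • d k

/-- Submatrix of `M` with rows indexed by `{i // P i}` and columns by `{i // Q i}`. -/
def subMat {n : ℕ} (M : Matrix (Fin n) (Fin n) ℝ) (P Q : Fin n → Prop) :
    Matrix {i // P i} {i // Q i} ℝ :=
  fun i j => M i.1 j.1

/-- `b` restricted to the index set `I₊ = {i : b_i > 0}`. -/
def bPlus {n : ℕ} (b : Fin n → ℝ) : {i : Fin n // 0 < b i} → ℝ := fun i => b i.1

/-- `F̄¹_ε = {y > 0 : (A(y^{[1/(m−1)]})^{m−1})_i ≥ ε b_i for all i ∈ I₊}`. -/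
def FBar1 {n q : ℕ} (A : Fin n → (Fin q → Fin n) → ℝ) (b : Fin n → ℝ) (ε : ℝ) :
    Set (Fin n → ℝ) :=
  {y | (∀ i, 0 < y i) ∧ ∀ i, 0 < b i → ε * b i ≤ tApp A (cPow y (1 / (q : ℝ))) i}

/-- `F̄²_{ε'} = {y > 0 : f'(y)_{I₊I₊} invertible and
`(A(y^{[1/(m−1)]})^{m−1})_{I₀} ≥ ε' f'(y)_{I₀I₊} f'(y)_{I₊I₊}⁻¹ b_{I₊}` componentwise}. -/
def FBar2 {n q : ℕ} (A : Fin n → (Fin q → Fin n) → ℝ) (b : Fin n → ℝ) (ε' : ℝ) :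
    Set (Fin n → ℝ) :=
  {y | (∀ i, 0 < y i) ∧
    IsUnit (subMat (jacM (fres A b) y) (fun i => 0 < b i) (fun i => 0 < b i)) ∧
    ∀ i : {i : Fin n // b i = 0},
      ε' * (subMat (jacM (fres A b) y) (fun i => b i = 0) (fun i => 0 < b i) *ᵥ
        ((subMat (jacM (fres A b) y) (fun i => 0 < b i) (fun i => 0 < b i))⁻¹ *ᵥ bPlus b)) i
        ≤ tApp A (cPow y (1 / (q : ℝ))) i.1}

/-- `F̄_{ε,ε'} = F̄¹_ε ∩ F̄²_{ε'}`. -/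
def FBar {n q : ℕ} (A : Fin n → (Fin q → Fin n) → ℝ) (b : Fin n → ℝ) (ε ε' : ℝ) :
    Set (Fin n → ℝ) :=
  FBar1 A b ε ∩ FBar2 A b ε'

/-- For every `i ∈ I₀` there exist indices `i₂,…,i_m ∈ I₊` with `a_{i i₂…i_m} ≠ 0`. -/
def I0Hyp {n q : ℕ} (A : Fin n → (Fin q → Fin n) → ℝ) (b : Fin n → ℝ) : Prop :=
  ∀ i : Fin n, b i = 0 → ∃ g : Fin q → Fin n, (∀ j, 0 < b (g j)) ∧ A i g ≠ 0



/-! With `y = x*^{[m-1]}` one has `A (y^{[1/(m-1)]})^{m-1} = b`, which gives the first condition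
since `ε ≤ 1`. The Jacobian `J = f'(y)` is a Z-matrix because `A` is a Z-tensor, and Euler's
identity for the degree-one homogeneous map `y ↦ A (y^{[1/(m-1)]})^{m-1}` gives `J y = b`.
Hence the block `J_{I₊I₊}` maps the positive vector `y_{I₊}` to a vector `≥ b_{I₊} > 0`, so it is
a nonsingular M-matrix: invertible, with `J_{I₊I₊}⁻¹ b_{I₊} ≥ 0`. As `J_{I₀I₊} ≤ 0`, this gives
`ε' J_{I₀I₊} J_{I₊I₊}⁻¹ b_{I₊} ≤ 0 = b_{I₀}`. -/

namespace Matrix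

variable {k : Type*} [Fintype k] {M : Matrix k k ℝ} {u : k → ℝ}

lemma nonneg_of_mulVec_nonneg (hZ : Pairwise fun i j => M i j ≤ 0) (hu : ∀ i, 0 < u i)
    (hMu : ∀ i, 0 < (M *ᵥ u) i) {v : k → ℝ} (hv : ∀ i, 0 ≤ (M *ᵥ v) i) (i : k) :
    0 ≤ v i := by
  -- `t = min_j v_j / u_j`; if `t < 0`, row `i₀` of `M (v - t u)` would be both `> 0` and `≤ 0`.
  obtain ⟨i₀, -, hmin⟩ := Finset.exists_min_image univ (fun j => v j / u j) ⟨i, mem_univ i⟩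
  set t := v i₀ / u i₀
  have hge : ∀ j, t * u j ≤ v j := fun j =>
    (le_div_iff₀ (hu j)).mp (hmin j (mem_univ j))
  have ht : 0 ≤ t := by
    by_contra! ht
    have hrow : (M *ᵥ (v - t • u)) i₀ ≤ 0 := by
      simp only [mulVec, dotProduct, Pi.sub_apply, Pi.smul_apply, smul_eq_mul]
      refine sum_nonpos fun j _ => ?_
      rcases eq_or_ne i₀ j with rfl | hne
      · simp [t, div_mul_cancel₀ _ (hu i₀).ne']
      · exact mul_nonpos_of_nonpos_of_nonneg (hZ hne) (sub_nonneg.mpr (hge j))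
    rw [mulVec_sub, mulVec_smul, Pi.sub_apply, Pi.smul_apply, smul_eq_mul] at hrow
    nlinarith [hv i₀, hMu i₀]
  nlinarith [hge i, hu i]

lemma isUnit_of_mulVec_pos [DecidableEq k] (hZ : Pairwise fun i j => M i j ≤ 0)
    (hu : ∀ i, 0 < u i) (hMu : ∀ i, 0 < (M *ᵥ u) i) : IsUnit M := by
  rw [← mulVec_injective_iff_isUnit]
  intro v w hvw
  have hker : ∀ i, 0 ≤ (M *ᵥ (v - w)) i ∧ 0 ≤ (M *ᵥ (w - v)) i := by
    simp [mulVec_sub, hvw]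
  funext i
  have h₁ := nonneg_of_mulVec_nonneg hZ hu hMu (fun i => (hker i).1) i
  have h₂ := nonneg_of_mulVec_nonneg hZ hu hMu (fun i => (hker i).2) i
  simp only [Pi.sub_apply] at h₁ h₂
  linarith

lemma inv_mulVec_nonneg [DecidableEq k] (hZ : Pairwise fun i j => M i j ≤ 0)
    (hu : ∀ i, 0 < u i) (hMu : ∀ i, 0 < (M *ᵥ u) i) {w : k → ℝ} (hw : ∀ i, 0 ≤ w i) (i : k) :
    0 ≤ (M⁻¹ *ᵥ w) i := by
  have hdet := (isUnit_iff_isUnit_det M).mp (isUnit_of_mulVec_pos hZ hu hMu)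
  refine nonneg_of_mulVec_nonneg hZ hu hMu (fun j => ?_) i
  rw [mulVec_mulVec, mul_nonsing_inv _ hdet, one_mulVec]
  exact hw j

end Matrix

section subMat

variable {n : ℕ} {J : Matrix (Fin n) (Fin n) ℝ}

lemma mulVec_apply_le_subMat_mulVec (hZ : Pairwise fun i j => J i j ≤ 0) {y : Fin n → ℝ}
    (hy : ∀ i, 0 ≤ y i) (P : Fin n → Prop) [DecidablePred P] (i : {i // P i}) :
    (J *ᵥ y) i ≤ (subMat J P P *ᵥ fun j => y j) i := by
  have hout : ∑ j : {j // ¬P j}, J i j * y j ≤ 0 :=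
    sum_nonpos fun j _ => mul_nonpos_of_nonpos_of_nonneg
      (hZ fun h => j.2 (h ▸ i.2)) (hy j)
  have hsplit := Fintype.sum_subtype_add_sum_subtype P fun j => J i j * y j
  simp only [mulVec, dotProduct, subMat] at hsplit ⊢
  linarith

lemma subMat_mulVec_nonpos (hZ : Pairwise fun i j => J i j ≤ 0) {P Q : Fin n → Prop}
    [DecidablePred Q] (hPQ : ∀ i, P i → ¬Q i) {v : {i // Q i} → ℝ} (hv : ∀ j, 0 ≤ v j)
    (i : {i // P i}) :
    (subMat J P Q *ᵥ v) i ≤ 0 := by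
  simp only [mulVec, dotProduct, subMat]
  exact sum_nonpos fun j _ => mul_nonpos_of_nonpos_of_nonneg
    (hZ fun h => hPQ i i.2 (by rw [h]; exact j.2)) (hv j)

end subMat

lemma IsStrongMTensor.isZTensor {n q : ℕ} {A : Fin n → (Fin q → Fin n) → ℝ}
    (hA : IsStrongMTensor A) : IsZTensor A := by
  obtain ⟨s, B, hB, hAB, -⟩ := hA
  intro i g hg
  simpa [hAB i g, identT, hg] using hB i g

lemma jacM_mulVec_apply {n : ℕ} (f : (Fin n → ℝ) → Fin n → ℝ) (y v : Fin n → ℝ) (i : Fin n) :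
    (jacM f y *ᵥ v) i = fderiv ℝ (fun z => f z i) y v := by
  conv_rhs => rw [pi_eq_sum_univ' v]
  simp [mulVec, dotProduct, jacM, mul_comm]

lemma hasFDerivAt_prod_rpow {ι κ : Type*} [Fintype ι] [Fintype κ] (g : ι → κ) (p : ℝ)
    {y : κ → ℝ} (hy : ∀ k, 0 < y k) :
    HasFDerivAt (fun z : κ → ℝ => ∏ j, z (g j) ^ p)
      ((p * ∏ j, y (g j) ^ p) •
        ∑ j, (y (g j))⁻¹ • ContinuousLinearMap.proj (R := ℝ) (φ := fun _ => ℝ) (g j)) y := by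
  classical
  refine (HasFDerivAt.finsetProd (u := univ) fun j _ =>
    (Real.hasDerivAt_rpow_const (p := p) (Or.inl (hy (g j)).ne')).comp_hasFDerivAt y
      (ContinuousLinearMap.proj (R := ℝ) (φ := fun _ : κ => ℝ) (g j)).hasFDerivAt).congr_fderiv
    ?_
  ext v
  simp only [Function.comp_apply, ContinuousLinearMap.proj_apply, _root_.sum_apply,
    _root_.smul_apply, smul_eq_mul, mul_sum]
  refine sum_congr rfl fun j _ => ?_
  rw [← mul_prod_erase univ _ (mem_univ j), Real.rpow_sub_one (hy (g j)).ne']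
  field_simp

section fres

variable {n q : ℕ} (A : Fin n → (Fin q → Fin n) → ℝ) (b : Fin n → ℝ) {y : Fin n → ℝ}

lemma fderiv_fres_apply (hy : ∀ k, 0 < y k) (i : Fin n) (v : Fin n → ℝ) :
    fderiv ℝ (fun z => fres A b z i) y v =
      ∑ g, A i g * ((1 / q) * ∏ j, y (g j) ^ (1 / q : ℝ)) * ∑ j, v (g j) / y (g j) := by
  have hF : HasFDerivAt (fun z => fres A b z i)
      (∑ g, A i g • ((1 / q * ∏ j, y (g j) ^ (1 / q : ℝ)) •
        ∑ j, (y (g j))⁻¹ • ContinuousLinearMap.proj (R := ℝ) (φ := fun _ => ℝ) (g j))) y :=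
    (HasFDerivAt.fun_sum fun g _ => (hasFDerivAt_prod_rpow g _ hy).const_mul (A i g)).sub_const _
  simp [hF.fderiv, div_eq_inv_mul, mul_sum, mul_assoc]

lemma jacM_fres_nonpos_of_ne (hA : IsZTensor A) (hy : ∀ k, 0 < y k) :
    Pairwise fun i k => jacM (fres A b) y i k ≤ 0 := by
  intro i k hik
  rw [jacM, fderiv_fres_apply A b hy]
  refine sum_nonpos fun g _ => ?_
  have hc : 0 ≤ 1 / (q : ℝ) * ∏ j, y (g j) ^ (1 / q : ℝ) :=
    mul_nonneg (by positivity) (prod_nonneg fun j _ => (Real.rpow_pos_of_pos (hy _) _).le)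
  by_cases hg : ∀ j, g j = i
  · simp [hg, Pi.single_eq_of_ne hik]
  · refine mul_nonpos_of_nonpos_of_nonneg (mul_nonpos_of_nonpos_of_nonneg (hA i g hg) hc)
      (sum_nonneg fun j _ => div_nonneg
        ((Pi.single_nonneg.mpr zero_le_one : (0 : Fin n → ℝ) ≤ Pi.single k 1) _) (hy _).le)

/-- Euler's identity for the positively homogeneous `y ↦ A (y^{[1/q]})^q`. -/
lemma jacM_fres_mulVec_self (hq : q ≠ 0) (hy : ∀ k, 0 < y k) :
    jacM (fres A b) y *ᵥ y = fun i => tApp A (cPow y (1 / q)) i := by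
  funext i
  rw [jacM_mulVec_apply, fderiv_fres_apply A b hy]
  refine sum_congr rfl fun g _ => ?_
  have hq' : ∑ j, y (g j) / y (g j) = q := by simp [div_self (hy _).ne']
  rw [hq']
  unfold cPow
  field_simp

end fres

theorem positive_solution_mem_FBar_general {m n : ℕ} (hm : 3 ≤ m)
    (A : Fin n → (Fin (m - 1) → Fin n) → ℝ)
    (hM : IsStrongMTensor A) (b : Fin n → ℝ)
    (ε ε' : ℝ) (h1 : 0 < ε') (h3 : ε ≤ 1)
    (xstar : Fin n → ℝ) (hx1 : ∀ i, 0 < xstar i) (hx2 : ∀ i, tApp A xstar i = b i) :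
    cPow xstar ((m - 1 : ℕ) : ℝ) ∈ FBar A b ε ε' := by
  have hq : ((m - 1 : ℕ) : ℝ) ≠ 0 := Nat.cast_ne_zero.mpr (by omega)
  set y := cPow xstar ((m - 1 : ℕ) : ℝ)
  have hy : ∀ i, 0 < y i := fun i => Real.rpow_pos_of_pos (hx1 i) _
  have hxy : cPow y (1 / ((m - 1 : ℕ) : ℝ)) = xstar := by
    funext i
    simp only [y, cPow, ← Real.rpow_mul (hx1 i).le, mul_one_div_cancel hq, Real.rpow_one]
  set J := jacM (fres A b) y
  have hZ : Pairwise fun i j => J i j ≤ 0 := jacM_fres_nonpos_of_ne A b hM.isZTensor hy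
  have hJy : J *ᵥ y = b := by
    rw [jacM_fres_mulVec_self A b (by exact_mod_cast hq) hy, hxy]
    exact funext hx2
  have hZsub : Pairwise fun i j => subMat J (fun i => 0 < b i) (fun i => 0 < b i) i j ≤ 0 :=
    fun i j hij => hZ (Subtype.coe_injective.ne hij)
  have hJsub : ∀ i, 0 < (subMat J (fun i => 0 < b i) (fun i => 0 < b i) *ᵥ fun j => y j) i :=
    fun i => i.2.trans_le ((congrFun hJy i).ge.trans
      (mulVec_apply_le_subMat_mulVec hZ (fun j => (hy j).le) _ i))
  refine ⟨⟨hy, fun i hi => ?_⟩, hy, Matrix.isUnit_of_mulVec_pos hZsub (hy ·) hJsub, fun i => ?_⟩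
  · rw [hxy, hx2]
    exact mul_le_of_le_one_left hi.le h3
  · rw [hxy, hx2, i.2]
    exact mul_nonpos_of_nonneg_of_nonpos h1.le (subMat_mulVec_nonpos hZ (fun _ hi => by simp [hi])
      (Matrix.inv_mulVec_nonneg hZsub (hy ·) hJsub fun j => j.2.le) i)

theorem positive_solution_mem_FBar {m n : ℕ} (hm : 3 ≤ m)
    (A : Fin n → (Fin (m - 1) → Fin n) → ℝ)
    (hsym : IsSemiSymmetric A) (hM : IsStrongMTensor A)
    (b : Fin n → ℝ) (hb : ∀ i, 0 ≤ b i) (hbp : ∃ i, 0 < b i)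
    (ε ε' : ℝ) (h1 : 0 < ε') (h2 : ε' < ε) (h3 : ε ≤ 1)
    (xstar : Fin n → ℝ) (hx1 : ∀ i, 0 < xstar i) (hx2 : ∀ i, tApp A xstar i = b i) :
    cPow xstar ((m - 1 : ℕ) : ℝ) ∈ FBar A b ε ε' :=
  positive_solution_mem_FBar_general hm A hM b ε ε' h1 h3 xstar hx1 hx2
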